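/- Asymptotics of the radius-restricted integral: Fix integers 1 ≤ k ≤ n and a real number ϑ̃_0 > 0, set α = (kn−2)/2, α' = (n−k−1)/2, β = n/2, c = σ_n/2, and g(s) = c ∫_0^s t^{β−1}(1−t)^{−1/2} dt. For ρ > 0 put ϑ_0 = ϑ̃_0 ρ^{−1/n} and J_1(δ) = ρ^k ∫_0^δ t^α (1−t)^{α'} e^{−ρ g(t)} dt. Then lim_{ρ → ∞} J_1(sin² ϑ_0) = (2 n^{k−1} / σ_n^k) · γ(ϑ̃_0^n ν_n; k), where ν_n = σ_n/n and γ(v; k) = ∫_0^v τ^{k−1} e^{−τ} dτ is the lower incomplete Gamma function. -/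

import Mathlib

open MeasureTheory Set

noncomputable section

/-- `σ_n`, the `(n-1)`-dimensional surface area of the unit sphere `S^{n-1} ⊆ ℝ^n`,
expressed as `n` times the volume of the unit ball in `ℝ^n`. -/
def sphereArea (n : ℕ) : ℝ :=
  n * (volume (Metric.ball (0 : EuclideanSpace ℝ (Fin n)) 1)).toReal

/-- `g(s) = c ∫_0^s t^(β-1) (1-t)^(-1/2) dt` with `c = σ_n/2` and `β = n/2`:
the area of the spherical cap on `S^n` whose Euclidean radius is `√s`. -/
def gFun (n : ℕ) (s : ℝ) : ℝ :=
  (sphereArea n / 2) * ∫ t in (0:ℝ)..s, t ^ ((n:ℝ)/2 - 1) * (1 - t) ^ (-(1:ℝ)/2)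

/-- `J₁(δ) = ρ^k ∫_0^δ t^α (1-t)^{α'} e^{-ρ g(t)} dt`,
with `α = (kn-2)/2` and `α' = (n-k-1)/2`. -/
def J₁ (n k : ℕ) (ρ δ : ℝ) : ℝ :=
  ρ ^ k * ∫ t in (0:ℝ)..δ,
    t ^ ((((k*n : ℕ) : ℝ) - 2) / 2) * (1 - t) ^ (((n:ℝ) - (k:ℝ) - 1) / 2) *
      Real.exp (-ρ * gFun n t)

/-- `J₂(δ) = ρ^k ∫_0^δ t^α e^{-ρ g(t)} dt`, with `α = (kn-2)/2`. -/
def J₂ (n k : ℕ) (ρ δ : ℝ) : ℝ :=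
  ρ ^ k * ∫ t in (0:ℝ)..δ,
    t ^ ((((k*n : ℕ) : ℝ) - 2) / 2) * Real.exp (-ρ * gFun n t)

/-- `J₃(δ) = ρ^k ∫_0^δ t^α e^{-ρ (c/β) t^β} dt`, with `α = (kn-2)/2`, `β = n/2`,
`c = σ_n/2`. -/
def J₃ (n k : ℕ) (ρ δ : ℝ) : ℝ :=
  ρ ^ k * ∫ t in (0:ℝ)..δ,
    t ^ ((((k*n : ℕ) : ℝ) - 2) / 2) *
      Real.exp (-ρ * ((sphereArea n / 2) / ((n:ℝ)/2)) * t ^ ((n:ℝ)/2))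

/-- `ν_n = σ_n / n`, the volume of the unit ball in `ℝ^n`. -/
def ballVol (n : ℕ) : ℝ := sphereArea n / n

/-- The lower incomplete Gamma function `γ(v; k) = ∫_0^v τ^(k-1) e^(-τ) dτ`. -/
def lincGamma (v : ℝ) (k : ℕ) : ℝ :=
  ∫ τ in (0:ℝ)..v, τ ^ ((k:ℝ) - 1) * Real.exp (-τ)

/-! Substituting `t = ρ^(-2/n) u` absorbs the factor `ρ^k`: `J₁(sin² ϑ₀)` becomes an integral
over `0 < u ≤ ϑ̃₀² sinc²(ϑ₀)`, an upper limit tending to `ϑ̃₀²`. Since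
`ν_n s^(n/2) ≤ g(s) ≤ ν_n s^(n/2) (1 - s)^(-1/2)`, the new integrand tends to
`u^α e^(-ν_n u^(n/2))`, and for large `ρ` it is dominated by `2 u^α`. Dominated convergence and the
substitution `τ = ν_n u^(n/2)` then produce the incomplete Gamma function. -/

open Filter Topology

theorem intervalIntegral.integral_rpow_mul_eq_integral_comp_mul_left {c δ : ℝ} (hc : 0 < c)
    (hδ : 0 ≤ δ) (α : ℝ) (f : ℝ → ℝ) :
    ∫ t in (0:ℝ)..δ, t ^ α * f t = c ^ (α + 1) * ∫ u in (0:ℝ)..δ / c, u ^ α * f (c * u) := by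
  have hsub := intervalIntegral.integral_comp_mul_left (fun t => t ^ α * f t) hc.ne'
    (a := 0) (b := δ / c)
  rw [mul_zero, mul_div_cancel₀ _ hc.ne', smul_eq_mul] at hsub
  have hpow : ∫ u in (0:ℝ)..δ / c, (c * u) ^ α * f (c * u)
      = c ^ α * ∫ u in (0:ℝ)..δ / c, u ^ α * f (c * u) := by
    rw [← intervalIntegral.integral_const_mul]
    refine intervalIntegral.integral_congr fun u hu => ?_
    rw [uIcc_of_le (by positivity)] at hu
    simp only [Real.mul_rpow hc.le hu.1, mul_assoc]
  rw [hpow] at hsub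
  rw [Real.rpow_add_one hc.ne', mul_comm (c ^ α), mul_assoc, hsub, ← mul_assoc,
    mul_inv_cancel₀ hc.ne', one_mul]

theorem intervalIntegral.integral_rpow_mul_exp_neg_mul_rpow {m β a : ℝ} (hm : 0 < m) (hβ : 0 < β)
    (ha : 0 ≤ a) (p : ℝ) :
    ∫ u in (0:ℝ)..a, u ^ (p * β - 1) * Real.exp (-(m * u ^ β))
      = (m ^ p * β)⁻¹ * ∫ τ in (0:ℝ)..m * a ^ β, τ ^ (p - 1) * Real.exp (-τ) := by
  have hsub := intervalIntegral.integral_comp_mul_deriv_of_deriv_nonneg (a := 0) (b := a)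
    (f := fun u => m * u ^ β) (f' := fun u => m * β * u ^ (β - 1))
    (g := fun τ => τ ^ (p - 1) * Real.exp (-τ))
    (continuousOn_const.mul (continuousOn_id.rpow_const fun _ _ => Or.inr hβ.le))
    (fun u hu => by
      rw [min_eq_left ha] at hu
      simpa only [mul_assoc] using (Real.hasDerivAt_rpow_const (Or.inl hu.1.ne')).const_mul m)
    (fun u hu => by rw [min_eq_left ha] at hu; have := hu.1; positivity)
  rw [Real.zero_rpow hβ.ne', mul_zero] at hsub
  rw [← hsub, ← intervalIntegral.integral_const_mul]
  refine intervalIntegral.integral_congr_ae (ae_of_all _ fun u hu => ?_)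
  rw [uIoc_of_le ha] at hu
  have hu0 := hu.1
  rw [Function.comp_apply, Real.mul_rpow hm.le (Real.rpow_nonneg hu0.le _), ← Real.rpow_mul hu0.le,
    Real.rpow_sub_one hm.ne', show p * β - 1 = β * (p - 1) + (β - 1) by ring,
    Real.rpow_add hu0]
  field_simp

theorem intervalIntegral.tendsto_integral_of_dominated_of_tendsto_right {ι : Type*} {l : Filter ι}
    [l.IsCountablyGenerated] {F : ι → ℝ → ℝ} {f bound : ℝ → ℝ} {b : ι → ℝ} {A : ℝ}
    (hb : Tendsto b l (𝓝 A)) (hbA : ∀ᶠ i in l, 0 ≤ b i ∧ b i ≤ A)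
    (hF_meas : ∀ᶠ i in l, AEStronglyMeasurable (F i) (volume.restrict (Ioc 0 (b i))))
    (h_bound : ∀ᶠ i in l, ∀ u ∈ Ioc 0 (b i), ‖F i u‖ ≤ bound u)
    (bound_integrable : IntegrableOn bound (Ioc 0 A))
    (h_lim : ∀ u ∈ Ioo 0 A, Tendsto (fun i => F i u) l (𝓝 (f u))) :
    Tendsto (fun i => ∫ u in (0:ℝ)..b i, F i u) l (𝓝 (∫ u in (0:ℝ)..A, f u)) := by
  rcases l.eq_or_neBot with rfl | _
  · exact tendsto_bot
  have hA : 0 ≤ A := ge_of_tendsto hb (hbA.mono fun _ h => h.1)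
  rw [intervalIntegral.integral_of_le hA, ← MeasureTheory.integral_indicator measurableSet_Ioc]
  refine (MeasureTheory.tendsto_integral_filter_of_dominated_convergence (l := l)
    (F := fun i => (Ioc 0 (b i)).indicator (F i))
    ((Ioc 0 A).indicator (‖bound ·‖)) ?_ ?_ ?_ ?_).congr' ?_
  · filter_upwards [hF_meas] with i hi
    exact (aestronglyMeasurable_indicator_iff measurableSet_Ioc).mpr hi
  · filter_upwards [hbA, h_bound] with i hi hbd
    refine ae_of_all _ fun u => ?_
    by_cases hu : u ∈ Ioc 0 (b i)
    · rw [indicator_of_mem hu, indicator_of_mem (show u ∈ Ioc 0 A from ⟨hu.1, hu.2.trans hi.2⟩)]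
      exact (hbd u hu).trans (Real.le_norm_self _)
    · rw [indicator_of_notMem hu, norm_zero]
      exact indicator_nonneg (fun _ _ => norm_nonneg _) u
  · exact (integrable_indicator_iff measurableSet_Ioc).mpr bound_integrable.norm
  · filter_upwards [volume.ae_ne A] with u hu
    by_cases hu' : u ∈ Ioo 0 A
    · rw [indicator_of_mem (Ioo_subset_Ioc_self hu')]
      refine (h_lim u hu').congr' ?_
      filter_upwards [hb.eventually (lt_mem_nhds hu'.2)] with i hi
      rw [indicator_of_mem (show u ∈ Ioc 0 (b i) from ⟨hu'.1, hi.le⟩)]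
    · have hu'' : u ∉ Ioc 0 A := fun h => hu' ⟨h.1, lt_of_le_of_ne h.2 hu⟩
      rw [indicator_of_notMem hu'']
      refine tendsto_const_nhds.congr' ?_
      filter_upwards [hbA] with i hi
      rw [indicator_of_notMem fun h => hu'' ⟨h.1, h.2.trans hi.2⟩]
  · filter_upwards [hbA] with i hi
    rw [intervalIntegral.integral_of_le hi.1, MeasureTheory.integral_indicator measurableSet_Ioc]

theorem rpow_neg_two_div_rpow_half {n : ℕ} (hn : 0 < n) {ρ : ℝ} (hρ : 0 < ρ) :
    (ρ ^ (-(2:ℝ)/n)) ^ ((n:ℝ)/2) = ρ⁻¹ := by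
  have hn' : (n:ℝ) ≠ 0 := Nat.cast_ne_zero.mpr hn.ne'
  rw [← Real.rpow_mul hρ.le, show -(2:ℝ)/n * (n/2) = -1 by field_simp, Real.rpow_neg_one]

theorem tendsto_rpow_neg_two_div_atTop {n : ℕ} (hn : 0 < n) :
    Tendsto (fun ρ : ℝ => ρ ^ (-(2:ℝ)/n)) atTop (𝓝 0) := by
  simpa only [neg_div] using tendsto_rpow_neg_atTop (by positivity : (0:ℝ) < 2/n)

theorem sphereArea_pos {n : ℕ} (hn : 0 < n) : 0 < sphereArea n :=
  mul_pos (Nat.cast_pos.mpr hn) <| ENNReal.toReal_pos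
    (Metric.measure_ball_pos _ _ one_pos).ne' measure_ball_lt_top.ne

theorem ballVol_pos {n : ℕ} (hn : 0 < n) : 0 < ballVol n :=
  div_pos (sphereArea_pos hn) (Nat.cast_pos.mpr hn)

theorem intervalIntegrable_gFun_integrand {n : ℕ} (hn : 0 < n) {s : ℝ} (hs : s < 1) :
    IntervalIntegrable (fun t : ℝ => t ^ ((n:ℝ)/2 - 1) * (1 - t) ^ (-(1:ℝ)/2)) volume 0 s := by
  have hn' : (1:ℝ) ≤ n := Nat.one_le_cast.mpr hn
  refine (intervalIntegral.intervalIntegrable_rpow' (by linarith)).mul_continuousOn ?_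
  refine (continuousOn_const.sub continuousOn_id).rpow_const fun t ht => Or.inl ?_
  have : t ≤ max 0 s := (Set.mem_uIcc.mp ht).elim (fun h => h.2.trans (le_max_right _ _))
    (fun h => h.2.trans (le_max_left _ _))
  exact (sub_pos.mpr (this.trans_lt (max_lt one_pos hs))).ne'

theorem continuousOn_gFun {n : ℕ} (hn : 0 < n) {s : ℝ} (hs : s < 1) :
    ContinuousOn (gFun n) (Icc 0 s) :=
  continuousOn_const.mul <| (intervalIntegral.continuousOn_primitive_interval
    ((intervalIntegrable_iff').mp (intervalIntegrable_gFun_integrand hn hs))).mono Icc_subset_uIcc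

theorem half_sphereArea_mul_integral_rpow {n : ℕ} (hn : 0 < n) (s : ℝ) :
    sphereArea n / 2 * ∫ t in (0:ℝ)..s, t ^ ((n:ℝ)/2 - 1) = ballVol n * s ^ ((n:ℝ)/2) := by
  have hn' : (0:ℝ) < n := Nat.cast_pos.mpr hn
  rw [integral_rpow (Or.inl (by linarith)), sub_add_cancel, Real.zero_rpow (by positivity),
    sub_zero, ballVol]
  field_simp

theorem ballVol_mul_rpow_le_gFun {n : ℕ} (hn : 0 < n) {s : ℝ} (hs0 : 0 ≤ s) (hs1 : s < 1) :
    ballVol n * s ^ ((n:ℝ)/2) ≤ gFun n s := by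
  have hn' : (0:ℝ) < n := Nat.cast_pos.mpr hn
  rw [← half_sphereArea_mul_integral_rpow hn, gFun]
  refine mul_le_mul_of_nonneg_left (intervalIntegral.integral_mono_on hs0
    (intervalIntegral.intervalIntegrable_rpow' (by linarith))
    (intervalIntegrable_gFun_integrand hn hs1) fun t ht => ?_) (by linarith [sphereArea_pos hn])
  refine le_mul_of_one_le_right (Real.rpow_nonneg ht.1 _) ?_
  exact Real.one_le_rpow_of_pos_of_le_one_of_nonpos (by linarith [ht.2]) (by linarith [ht.1])
    (by norm_num)

theorem gFun_le_ballVol_mul_rpow {n : ℕ} (hn : 0 < n) {s : ℝ} (hs0 : 0 ≤ s) (hs1 : s < 1) :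
    gFun n s ≤ ballVol n * s ^ ((n:ℝ)/2) * (1 - s) ^ (-(1:ℝ)/2) := by
  have hn' : (0:ℝ) < n := Nat.cast_pos.mpr hn
  rw [← half_sphereArea_mul_integral_rpow hn, mul_assoc, ← intervalIntegral.integral_mul_const,
    gFun]
  refine mul_le_mul_of_nonneg_left (intervalIntegral.integral_mono_on hs0
    (intervalIntegrable_gFun_integrand hn hs1)
    ((intervalIntegral.intervalIntegrable_rpow' (by linarith)).mul_const _) fun t ht => ?_)
    (by linarith [sphereArea_pos hn])
  exact mul_le_mul_of_nonneg_left (Real.rpow_le_rpow_of_nonpos (by linarith) (by linarith [ht.2])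
    (by norm_num)) (Real.rpow_nonneg ht.1 _)

theorem tendsto_mul_gFun_rpow_mul {n : ℕ} (hn : 0 < n) {u : ℝ} (hu : 0 ≤ u) :
    Tendsto (fun ρ : ℝ => ρ * gFun n (ρ ^ (-(2:ℝ)/n) * u)) atTop
      (𝓝 (ballVol n * u ^ ((n:ℝ)/2))) := by
  have hs : Tendsto (fun ρ : ℝ => ρ ^ (-(2:ℝ)/n) * u) atTop (𝓝 0) := by
    simpa using (tendsto_rpow_neg_two_div_atTop hn).mul_const u
  have hscale : ∀ ρ > 0, ρ * (ballVol n * (ρ ^ (-(2:ℝ)/n) * u) ^ ((n:ℝ)/2))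
      = ballVol n * u ^ ((n:ℝ)/2) := fun ρ hρ => by
    rw [Real.mul_rpow (Real.rpow_nonneg hρ.le _) hu, rpow_neg_two_div_rpow_half hn hρ]
    field_simp
  have hupper : Tendsto (fun ρ : ℝ => ballVol n * u ^ ((n:ℝ)/2) *
      (1 - ρ ^ (-(2:ℝ)/n) * u) ^ (-(1:ℝ)/2)) atTop (𝓝 (ballVol n * u ^ ((n:ℝ)/2))) := by
    simpa using (((tendsto_const_nhds (x := (1:ℝ))).sub hs).rpow_const
      (Or.inl (by norm_num))).const_mul (ballVol n * u ^ ((n:ℝ)/2))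
  have hsmall : ∀ᶠ ρ : ℝ in atTop, 0 < ρ ∧ 0 ≤ ρ ^ (-(2:ℝ)/n) * u ∧ ρ ^ (-(2:ℝ)/n) * u < 1 := by
    filter_upwards [eventually_gt_atTop 0, hs.eventually (eventually_lt_nhds one_pos)]
      with ρ hρ hs1
    exact ⟨hρ, mul_nonneg (Real.rpow_nonneg hρ.le _) hu, hs1⟩
  refine tendsto_of_tendsto_of_tendsto_of_le_of_le' tendsto_const_nhds hupper ?_ ?_
  · filter_upwards [hsmall] with ρ ⟨hρ, hs0, hs1⟩
    rw [← hscale ρ hρ]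
    exact mul_le_mul_of_nonneg_left (ballVol_mul_rpow_le_gFun hn hs0 hs1) hρ.le
  · filter_upwards [hsmall] with ρ ⟨hρ, hs0, hs1⟩
    rw [← hscale ρ hρ, mul_assoc ρ]
    exact mul_le_mul_of_nonneg_left (gFun_le_ballVol_mul_rpow hn hs0 hs1) hρ.le

def rescaledIntegrand (n k : ℕ) (ρ u : ℝ) : ℝ :=
  u ^ ((((k*n : ℕ) : ℝ) - 2) / 2) * (1 - ρ ^ (-(2:ℝ)/n) * u) ^ (((n:ℝ) - (k:ℝ) - 1) / 2) *
    Real.exp (-ρ * gFun n (ρ ^ (-(2:ℝ)/n) * u))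

theorem J₁_eq_integral_rescaledIntegrand {n : ℕ} (hn : 0 < n) (k : ℕ) {ρ δ : ℝ} (hρ : 0 < ρ)
    (hδ : 0 ≤ δ) :
    J₁ n k ρ δ = ∫ u in (0:ℝ)..δ / ρ ^ (-(2:ℝ)/n), rescaledIntegrand n k ρ u := by
  have hn' : (n:ℝ) ≠ 0 := Nat.cast_ne_zero.mpr hn.ne'
  have hscale : ρ ^ k * (ρ ^ (-(2:ℝ)/n)) ^ ((((k*n : ℕ) : ℝ) - 2) / 2 + 1) = 1 := by
    rw [show (((k*n : ℕ) : ℝ) - 2) / 2 + 1 = (n:ℝ)/2 * k by push_cast; ring,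
      Real.rpow_mul (Real.rpow_nonneg hρ.le _), Real.rpow_natCast,
      rpow_neg_two_div_rpow_half hn hρ, inv_pow, mul_inv_cancel₀ (pow_ne_zero _ hρ.ne')]
  simp only [J₁, rescaledIntegrand, mul_assoc]
  rw [intervalIntegral.integral_rpow_mul_eq_integral_comp_mul_left
    (Real.rpow_pos_of_pos hρ (-(2:ℝ)/n)) hδ, ← mul_assoc, hscale, one_mul]

theorem continuousOn_rescaledIntegrand {n : ℕ} (hn : 0 < n) (k : ℕ) {ρ b : ℝ} (hρ : 0 < ρ)
    (hb : ρ ^ (-(2:ℝ)/n) * b < 1) :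
    ContinuousOn (rescaledIntegrand n k ρ) (Ioc 0 b) := by
  have hpos := Real.rpow_pos_of_pos hρ (-(2:ℝ)/n)
  have hmaps : MapsTo (fun u => ρ ^ (-(2:ℝ)/n) * u) (Ioc 0 b) (Icc 0 (ρ ^ (-(2:ℝ)/n) * b)) :=
    fun u hu => ⟨(mul_pos hpos hu.1).le, mul_le_mul_of_nonneg_left hu.2 hpos.le⟩
  refine ((continuousOn_id.rpow_const fun u hu => Or.inl hu.1.ne').mul
    ((continuousOn_const.sub (continuousOn_const.mul continuousOn_id)).rpow_const
      fun u hu => Or.inl ?_)).mul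
    (Real.continuous_exp.comp_continuousOn (continuousOn_const.mul
      ((continuousOn_gFun hn hb).comp (continuousOn_const.mul continuousOn_id) hmaps)))
  exact (sub_pos.mpr ((hmaps hu).2.trans_lt hb)).ne'

theorem norm_rescaledIntegrand_le {n k : ℕ} (hn : 0 < n) (hkn : k ≤ n) {ρ u : ℝ} (hρ : 0 < ρ)
    (hu : 0 ≤ u) (hs : ρ ^ (-(2:ℝ)/n) * u ≤ 1/2) :
    ‖rescaledIntegrand n k ρ u‖ ≤ 2 * u ^ ((((k*n : ℕ) : ℝ) - 2) / 2) := by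
  set s := ρ ^ (-(2:ℝ)/n) * u
  have hs0 : 0 ≤ s := mul_nonneg (Real.rpow_nonneg hρ.le _) hu
  have hg : 0 ≤ gFun n s := (mul_nonneg (ballVol_pos hn).le (Real.rpow_nonneg hs0 _)).trans
    (ballVol_mul_rpow_le_gFun hn hs0 (by linarith))
  have hpow : (1 - s) ^ (((n:ℝ) - (k:ℝ) - 1) / 2) ≤ 2 := by
    have hkn' : (k:ℝ) ≤ n := Nat.cast_le.mpr hkn
    calc (1 - s) ^ (((n:ℝ) - (k:ℝ) - 1) / 2) ≤ (1 - s) ^ (-1:ℝ) :=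
          Real.rpow_le_rpow_of_exponent_ge (by linarith) (by linarith) (by linarith)
      _ ≤ 2 := by
          rw [Real.rpow_neg_one, inv_le_comm₀ (by linarith) two_pos]
          linarith
  have hexp : Real.exp (-ρ * gFun n s) ≤ 1 :=
    Real.exp_le_one_iff.mpr (by nlinarith)
  have h1s : 0 ≤ (1 - s) ^ (((n:ℝ) - (k:ℝ) - 1) / 2) := Real.rpow_nonneg (by linarith) _
  rw [rescaledIntegrand, Real.norm_eq_abs, abs_of_nonneg (by positivity)]
  calc _ ≤ u ^ ((((k*n : ℕ) : ℝ) - 2) / 2) * 2 * 1 := by gcongr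
    _ = _ := by ring

theorem tendsto_rescaledIntegrand {n : ℕ} (hn : 0 < n) (k : ℕ) {u : ℝ} (hu : 0 ≤ u) :
    Tendsto (fun ρ => rescaledIntegrand n k ρ u) atTop
      (𝓝 (u ^ ((((k*n : ℕ) : ℝ) - 2) / 2) * Real.exp (-(ballVol n * u ^ ((n:ℝ)/2))))) := by
  have hs : Tendsto (fun ρ : ℝ => 1 - ρ ^ (-(2:ℝ)/n) * u) atTop (𝓝 1) := by
    simpa using tendsto_const_nhds.sub ((tendsto_rpow_neg_two_div_atTop hn).mul_const u)
  simpa [rescaledIntegrand, neg_mul] using (tendsto_const_nhds.mul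
    (hs.rpow_const (Or.inl one_ne_zero))).mul (tendsto_mul_gFun_rpow_mul hn hu).neg.rexp

theorem inv_ballVol_rpow_mul_half {n k : ℕ} (hn : 0 < n) (hk : 1 ≤ k) :
    (ballVol n ^ (k:ℝ) * ((n:ℝ)/2))⁻¹ = 2 * (n:ℝ) ^ (k - 1) / sphereArea n ^ k := by
  obtain ⟨j, rfl⟩ := Nat.exists_eq_add_of_le' hk
  have := sphereArea_pos hn
  have hn' : (0:ℝ) < n := Nat.cast_pos.mpr hn
  rw [Real.rpow_natCast, ballVol, div_pow, Nat.add_sub_cancel]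
  field_simp
  ring

theorem integral_rpow_mul_exp_neg_ballVol_mul_rpow {n k : ℕ} (hn : 0 < n) (hk : 1 ≤ k) {a : ℝ}
    (ha : 0 ≤ a) :
    ∫ u in (0:ℝ)..a ^ 2, u ^ ((((k*n : ℕ) : ℝ) - 2) / 2) * Real.exp (-(ballVol n * u ^ ((n:ℝ)/2)))
      = (2 * (n:ℝ) ^ (k - 1) / sphereArea n ^ k) * lincGamma (a ^ n * ballVol n) k := by
  have hpow : (a ^ 2) ^ ((n:ℝ)/2) = a ^ n := by
    rw [← Real.rpow_natCast a 2, ← Real.rpow_mul ha, ← Real.rpow_natCast a n]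
    congr 1
    push_cast
    ring
  rw [show (((k*n : ℕ) : ℝ) - 2) / 2 = (k:ℝ) * ((n:ℝ)/2) - 1 by push_cast; ring,
    intervalIntegral.integral_rpow_mul_exp_neg_mul_rpow (ballVol_pos hn) (by simpa using hn)
      (sq_nonneg a), inv_ballVol_rpow_mul_half hn hk, hpow, mul_comm (ballVol n), lincGamma]

theorem rpow_neg_one_div_sq {n : ℕ} {ρ : ℝ} (hρ : 0 < ρ) :
    (ρ ^ (-(1:ℝ)/n)) ^ 2 = ρ ^ (-(2:ℝ)/n) := by
  rw [← Real.rpow_natCast, ← Real.rpow_mul hρ.le]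
  ring_nf

theorem sin_mul_sq_div_sq {c x : ℝ} (hc : c ≠ 0) (hx : x ≠ 0) :
    Real.sin (c * x) ^ 2 / x ^ 2 = c ^ 2 * Real.sinc (c * x) ^ 2 := by
  rw [Real.sinc_of_ne_zero (mul_ne_zero hc hx)]
  field_simp

theorem tendsto_sq_mul_sinc_sq_rpow {n : ℕ} (hn : 0 < n) (c : ℝ) :
    Tendsto (fun ρ : ℝ => c ^ 2 * Real.sinc (c * ρ ^ (-(1:ℝ)/n)) ^ 2) atTop (𝓝 (c ^ 2)) := by
  have hε : Tendsto (fun ρ : ℝ => c * ρ ^ (-(1:ℝ)/n)) atTop (𝓝 0) := by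
    simpa [neg_div] using (tendsto_rpow_neg_atTop (by positivity : (0:ℝ) < 1/n)).const_mul c
  simpa using (((Real.continuous_sinc.tendsto 0).comp hε).pow 2).const_mul (c ^ 2)

theorem J₁_sin_sq_eq_integral_rescaledIntegrand {n : ℕ} (hn : 0 < n) (k : ℕ) {ρ c : ℝ}
    (hρ : 0 < ρ) (hc : c ≠ 0) :
    J₁ n k ρ (Real.sin (c * ρ ^ (-(1:ℝ)/n)) ^ 2)
      = ∫ u in (0:ℝ)..c ^ 2 * Real.sinc (c * ρ ^ (-(1:ℝ)/n)) ^ 2, rescaledIntegrand n k ρ u := by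
  rw [J₁_eq_integral_rescaledIntegrand hn k hρ (sq_nonneg _), ← rpow_neg_one_div_sq hρ,
    sin_mul_sq_div_sq hc (Real.rpow_pos_of_pos hρ _).ne']

/-- **Asymptotics of the radius-restricted integral.**
With `ϑ₀ = ϑ̃₀ ρ^(-1/n)`, `J₁(sin² ϑ₀) → (2 n^(k-1)/σ_n^k) γ(ϑ̃₀^n ν_n; k)` as `ρ → ∞`. -/
theorem radius_restricted_asymptotics (n k : ℕ) (hk : 1 ≤ k) (hkn : k ≤ n)
    (ϑ' : ℝ) (hϑ' : 0 < ϑ') :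
    Filter.Tendsto
      (fun ρ : ℝ => J₁ n k ρ (Real.sin (ϑ' * ρ ^ (-(1:ℝ)/(n:ℝ))) ^ 2))
      Filter.atTop
      (nhds ((2 * (n:ℝ) ^ (k - 1) / sphereArea n ^ k) * lincGamma (ϑ' ^ (n:ℕ) * ballVol n) k)) := by
  have hn : 0 < n := lt_of_lt_of_le hk hkn
  have hα : (-1:ℝ) < (((k*n : ℕ) : ℝ) - 2) / 2 := by
    have : (1:ℝ) ≤ ((k*n : ℕ) : ℝ) := Nat.one_le_cast.mpr (Nat.mul_pos hk hn)
    linarith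
  have hsmall : ∀ᶠ ρ : ℝ in atTop, 0 < ρ ∧ ρ ^ (-(2:ℝ)/n) * ϑ' ^ 2 ≤ 1/2 :=
    (eventually_gt_atTop 0).and (((tendsto_rpow_neg_two_div_atTop hn).mul_const _).eventually
      (eventually_le_nhds (by norm_num : (0:ℝ) * ϑ' ^ 2 < 1/2)))
  have hbA : ∀ᶠ ρ : ℝ in atTop, 0 ≤ ϑ' ^ 2 * Real.sinc (ϑ' * ρ ^ (-(1:ℝ)/n)) ^ 2 ∧
      ϑ' ^ 2 * Real.sinc (ϑ' * ρ ^ (-(1:ℝ)/n)) ^ 2 ≤ ϑ' ^ 2 := Eventually.of_forall fun ρ =>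
    ⟨by positivity, mul_le_of_le_one_right (sq_nonneg _)
      ((sq_le_one_iff_abs_le_one _).mpr (Real.abs_sinc_le_one _))⟩
  rw [← integral_rpow_mul_exp_neg_ballVol_mul_rpow hn hk hϑ'.le]
  refine (intervalIntegral.tendsto_integral_of_dominated_of_tendsto_right
    (bound := fun u => 2 * u ^ ((((k*n : ℕ) : ℝ) - 2) / 2)) (tendsto_sq_mul_sinc_sq_rpow hn ϑ')
    hbA ?_ ?_ ?_ fun u hu => tendsto_rescaledIntegrand hn k hu.1.le).congr' ?_
  · filter_upwards [hsmall, hbA] with ρ ⟨hρ, hsmall⟩ ⟨_, hbρ⟩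
    refine (continuousOn_rescaledIntegrand hn k hρ ?_).aestronglyMeasurable measurableSet_Ioc
    exact (mul_le_mul_of_nonneg_left hbρ (Real.rpow_nonneg hρ.le _)).trans_lt (by linarith)
  · filter_upwards [hsmall, hbA] with ρ ⟨hρ, hsmall⟩ ⟨_, hbρ⟩ u hu
    exact norm_rescaledIntegrand_le hn hkn hρ hu.1.le
      ((mul_le_mul_of_nonneg_left (hu.2.trans hbρ) (Real.rpow_nonneg hρ.le _)).trans hsmall)
  · exact (intervalIntegrable_iff_integrableOn_Ioc_of_le (sq_nonneg ϑ')).mp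
      ((intervalIntegral.intervalIntegrable_rpow' hα).const_mul 2)
  · filter_upwards [eventually_gt_atTop 0] with ρ hρ
    exact (J₁_sin_sq_eq_integral_rescaledIntegrand hn k hρ hϑ'.ne').symm
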